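/- arXiv:2106.13345 — 7 statements merged into one kernel-verified Lean document; each statement's English description precedes it below -/
import Mathlib

section
/- For real numbers a, b ≥ 0 with b ≠ 0, one has (1/3)·min{|a²−b²|/b, √|a²−b²|} ≤ |a−b| ≤ min{|a²−b²|/b, √|a²−b²|}. -/
/-!
Write `|a² - b²| = |a - b| (a + b)`. Since `b ≤ a + b` and `|a - b| ≤ a + b`, both `|a² - b²| / b`
and `|a² - b²|` dominate the corresponding powers of `|a - b|`. Conversely, if `a ≤ 2b` then
`a + b ≤ 3b`, so `|a² - b²| / b ≤ 3 |a - b|`; if `a > 2b` then `a + b < 3 (a - b)`, so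
`|a² - b²| ≤ 3 |a - b|² ≤ (3 |a - b|)²`.
-/

section LinearOrderedField

variable {K : Type*} [Field K] [LinearOrder K] [IsStrictOrderedRing K] {a b : K}

lemma abs_sub_le_add_of_nonneg (ha : 0 ≤ a) (hb : 0 ≤ b) : |a - b| ≤ a + b :=
  abs_sub_le_iff.2 ⟨by linarith, by linarith⟩

lemma abs_sq_sub_sq_of_nonneg (ha : 0 ≤ a) (hb : 0 ≤ b) :
    |a ^ 2 - b ^ 2| = |a - b| * (a + b) := by
  rw [sq_sub_sq, abs_mul, abs_of_nonneg (add_nonneg ha hb), mul_comm]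

lemma abs_sub_le_abs_sq_sub_sq_div (ha : 0 ≤ a) (hb : 0 < b) :
    |a - b| ≤ |a ^ 2 - b ^ 2| / b := by
  rw [abs_sq_sub_sq_of_nonneg ha hb.le, le_div_iff₀ hb]
  exact mul_le_mul_of_nonneg_left (by linarith) (abs_nonneg _)

lemma abs_sq_sub_sq_div_le_of_le_two_mul (ha : 0 ≤ a) (hb : 0 < b) (h : a ≤ 2 * b) :
    |a ^ 2 - b ^ 2| / b ≤ 3 * |a - b| := by
  rw [abs_sq_sub_sq_of_nonneg ha hb.le, div_le_iff₀ hb]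
  nlinarith [abs_nonneg (a - b)]

lemma abs_sq_sub_sq_le_of_two_mul_lt (hb : 0 ≤ b) (h : 2 * b < a) :
    |a ^ 2 - b ^ 2| ≤ (3 * |a - b|) ^ 2 := by
  have hab : a + b ≤ 3 * |a - b| := by
    rw [abs_of_pos (by linarith : 0 < a - b)]
    linarith
  rw [abs_sq_sub_sq_of_nonneg (by linarith) hb]
  nlinarith [abs_nonneg (a - b)]

end LinearOrderedField

lemma abs_sub_le_sqrt_abs_sq_sub_sq {a b : ℝ} (ha : 0 ≤ a) (hb : 0 ≤ b) :
    |a - b| ≤ √|a ^ 2 - b ^ 2| := by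
  rw [Real.le_sqrt (abs_nonneg _) (abs_nonneg _), abs_sq_sub_sq_of_nonneg ha hb, sq]
  exact mul_le_mul_of_nonneg_left (abs_sub_le_add_of_nonneg ha hb) (abs_nonneg _)

lemma sqrt_abs_sq_sub_sq_le_of_two_mul_lt {a b : ℝ} (hb : 0 ≤ b) (h : 2 * b < a) :
    √|a ^ 2 - b ^ 2| ≤ 3 * |a - b| :=
  Real.sqrt_le_iff.2 ⟨by positivity, abs_sq_sub_sq_le_of_two_mul_lt hb h⟩

theorem a2b2_ab_comparison (a b : ℝ) (ha : 0 ≤ a) (hb : 0 ≤ b) (hb0 : b ≠ 0) :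
    (1 / 3) * min (|a ^ 2 - b ^ 2| / b) (Real.sqrt |a ^ 2 - b ^ 2|) ≤ |a - b| ∧
      |a - b| ≤ min (|a ^ 2 - b ^ 2| / b) (Real.sqrt |a ^ 2 - b ^ 2|) := by
  have hb_pos : 0 < b := hb.lt_of_ne' hb0
  refine ⟨?_, le_min (abs_sub_le_abs_sq_sub_sq_div ha hb_pos) (abs_sub_le_sqrt_abs_sq_sub_sq ha hb)⟩
  rw [one_div_mul_eq_div, div_le_iff₀' three_pos]
  rcases le_or_gt a (2 * b) with h | h
  · exact (min_le_left _ _).trans (abs_sq_sub_sq_div_le_of_le_two_mul ha hb_pos h)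
  · exact (min_le_right _ _).trans (sqrt_abs_sq_sub_sq_le_of_two_mul_lt hb h)
end

section
/- If a random variable X satisfies ‖X‖_{L_p} ≤ Σ_{k=1}^{d} min_{l∈T} p^{e_{k,l}} γ_{k,l} for all p ≥ p₀ ≥ 0, where T is a finite set and γ_{k,l} > 0, then for all t > 0, P(|X| > t) ≤ e^{p₀} exp(− min_{k∈[d]} max_{l∈T} (t/(e·d·γ_{k,l}))^{1/e_{k,l}}). -/
open MeasureTheory Finset

/-! Let `u` be the minimum over `k` of the maxima in the bound. Markov's inequality for `|X| ^ u`
gives `P(|X| > t) ≤ (‖X‖_u / t) ^ u`. The choice of `u` makes every summand of the moment bound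
at `p = u` at most `t / (e d)`, so `‖X‖_u ≤ t / e` and the tail is at most `e ^ (-u)`. If
`u ≤ p₀` the moment bound is unavailable at `u`, but then the right-hand side is at least `1`. -/

theorem meas_lt_abs_le_ofReal_div_rpow {Ω : Type*} [MeasurableSpace Ω] {μ : Measure Ω}
    {X : Ω → ℝ} (hX : Measurable X) {p t M : ℝ} (hp : 0 < p) (ht : 0 < t)
    (hmom : (∫⁻ ω, ENNReal.ofReal (|X ω| ^ p) ∂μ) ^ (1 / p) ≤ ENNReal.ofReal M) :
    μ {ω | t < |X ω|} ≤ ENNReal.ofReal (M / t) ^ p := by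
  have htp : ENNReal.ofReal (t ^ p) ≠ 0 :=
    (ENNReal.ofReal_pos.2 (Real.rpow_pos_of_pos ht p)).ne'
  have hmom' : ∫⁻ ω, ENNReal.ofReal (|X ω| ^ p) ∂μ ≤ ENNReal.ofReal M ^ p := by
    simpa [ENNReal.rpow_inv_rpow hp.ne'] using ENNReal.rpow_le_rpow hmom hp.le
  calc μ {ω | t < |X ω|}
      ≤ μ {ω | ENNReal.ofReal (t ^ p) ≤ ENNReal.ofReal (|X ω| ^ p)} :=
        measure_mono fun ω hω ↦
          ENNReal.ofReal_le_ofReal (Real.rpow_le_rpow ht.le (le_of_lt hω) hp.le)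
    _ ≤ (∫⁻ ω, ENNReal.ofReal (|X ω| ^ p) ∂μ) / ENNReal.ofReal (t ^ p) :=
        meas_ge_le_lintegral_div (by fun_prop) htp ENNReal.ofReal_ne_top
    _ ≤ ENNReal.ofReal M ^ p / ENNReal.ofReal t ^ p := by
        rw [ENNReal.ofReal_rpow_of_pos ht]
        gcongr
    _ = ENNReal.ofReal (M / t) ^ p := by
        rw [← ENNReal.div_rpow_of_nonneg _ _ hp.le, ENNReal.ofReal_div_of_pos ht]

theorem meas_lt_abs_le_exp_neg {Ω : Type*} [MeasurableSpace Ω] {μ : Measure Ω}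
    {X : Ω → ℝ} (hX : Measurable X) {p t M : ℝ} (hp : 0 < p) (ht : 0 < t)
    (hmom : (∫⁻ ω, ENNReal.ofReal (|X ω| ^ p) ∂μ) ^ (1 / p) ≤ ENNReal.ofReal M)
    (hM : M ≤ t / Real.exp 1) :
    μ {ω | t < |X ω|} ≤ ENNReal.ofReal (Real.exp (-p)) := by
  have hMt : M / t ≤ Real.exp (-1) := by
    rwa [div_le_iff₀ ht, Real.exp_neg, ← div_eq_inv_mul]
  calc μ {ω | t < |X ω|} ≤ ENNReal.ofReal (M / t) ^ p :=
        meas_lt_abs_le_ofReal_div_rpow hX hp ht hmom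
    _ ≤ ENNReal.ofReal (Real.exp (-1)) ^ p := by gcongr
    _ = ENNReal.ofReal (Real.exp (-p)) := by
        rw [ENNReal.ofReal_rpow_of_pos (Real.exp_pos _), ← Real.exp_mul, neg_one_mul]

theorem rpow_mul_le_of_le_div_rpow_inv {u e γ c : ℝ} (hu : 0 ≤ u) (he : 0 < e) (hγ : 0 < γ)
    (hc : 0 ≤ c) (h : u ≤ (c / γ) ^ (1 / e)) : u ^ e * γ ≤ c := by
  rw [one_div, Real.le_rpow_inv_iff_of_pos hu (div_nonneg hc hγ.le) he] at h
  rwa [le_div_iff₀ hγ] at h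

theorem inf'_rpow_mul_le_of_le_sup' {ι : Type*} {s : Finset ι} (hs : s.Nonempty) {e γ : ι → ℝ}
    (he : ∀ l ∈ s, 0 < e l) (hγ : ∀ l ∈ s, 0 < γ l) {u c : ℝ} (hu : 0 ≤ u) (hc : 0 ≤ c)
    (h : u ≤ s.sup' hs fun l ↦ (c / γ l) ^ (1 / e l)) :
    (s.inf' hs fun l ↦ u ^ e l * γ l) ≤ c := by
  obtain ⟨l, hl, hul⟩ := (le_sup'_iff hs).1 h
  exact (inf'_le _ hl).trans (rpow_mul_le_of_le_div_rpow_inv hu (he l hl) (hγ l hl) hc hul)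

/-- Moments and tail bounds: mixed-tail version. -/
theorem moment_tail_bound {Ω : Type*} [MeasurableSpace Ω] (μ : Measure Ω)
    [IsProbabilityMeasure μ] (X : Ω → ℝ) (hX : Measurable X)
    (d : ℕ) (hd : 0 < d) {ι : Type*} (T : Finset ι) (hT : T.Nonempty)
    (e γ : Fin d → ι → ℝ)
    (he : ∀ k, ∀ l ∈ T, 0 < e k l) (hγ : ∀ k, ∀ l ∈ T, 0 < γ k l)
    (p₀ : ℝ) (hp₀ : 0 ≤ p₀)
    (hmom : ∀ p, p₀ ≤ p →
      (∫⁻ ω, ENNReal.ofReal (|X ω| ^ p) ∂μ) ^ (1 / p) ≤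
        ENNReal.ofReal (∑ k : Fin d, T.inf' hT fun l => p ^ e k l * γ k l))
    (t : ℝ) (ht : 0 < t) :
    μ {ω | t < |X ω|} ≤
      ENNReal.ofReal (Real.exp p₀ *
        Real.exp (- (Finset.univ.inf' ⟨⟨0, hd⟩, Finset.mem_univ _⟩
          fun k : Fin d => T.sup' hT
            fun l => (t / (Real.exp 1 * d * γ k l)) ^ (1 / e k l)))) := by
  set u := univ.inf' ⟨⟨0, hd⟩, mem_univ _⟩
    fun k : Fin d ↦ T.sup' hT fun l ↦ (t / (Real.exp 1 * d * γ k l)) ^ (1 / e k l)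
  rw [← Real.exp_add]
  rcases le_or_gt u p₀ with hu | hu
  · refine prob_le_one.trans ?_
    rw [← ENNReal.ofReal_one]
    exact ENNReal.ofReal_le_ofReal (Real.one_le_exp (by linarith))
  have hsum : ∑ k : Fin d, T.inf' hT (fun l ↦ u ^ e k l * γ k l) ≤ t / Real.exp 1 := by
    have hc : 0 ≤ t / (Real.exp 1 * d) := by positivity
    calc ∑ k : Fin d, T.inf' hT (fun l ↦ u ^ e k l * γ k l)
        ≤ ∑ _k : Fin d, t / (Real.exp 1 * d) := by
          refine sum_le_sum fun k _ ↦ inf'_rpow_mul_le_of_le_sup' hT (he k) (hγ k)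
            (hp₀.trans hu.le) hc ?_
          exact (inf'_le _ (mem_univ k)).trans_eq (by simp only [div_mul_eq_div_div])
      _ = t / Real.exp 1 := by
          rw [sum_const, card_univ, Fintype.card_fin, nsmul_eq_mul]
          field_simp
  calc μ {ω | t < |X ω|} ≤ ENNReal.ofReal (Real.exp (-u)) :=
        meas_lt_abs_le_exp_neg hX (hp₀.trans_lt hu) ht (hmom u hu.le) hsum
    _ ≤ _ := ENNReal.ofReal_le_ofReal (Real.exp_le_exp.2 (by linarith))
end

section
/- There exist absolute constants κ, λ > 0 such that: if X is a random variable with E X² = 1 and subgaussian norm at most L (L ≥ 1), g ∼ N(0,1), and ξ, ξ′ are Rademacher variables independent of X and g, then for all t > 0, P(|ξ(X² − 1)| > t) ≤ κ · P(λ L² |ξ′(g² − 1)| > t). -/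
/-!
A Rademacher sign does not change absolute values, so both sides are tails of `|X² - 1|` and
`|g² - 1|`. Markov's inequality for the `p`-th moment with `p = s² / (2L²)` gives the subgaussian
tail `P(|X| ≥ s) ≤ 2^(-s² / (4L²))`, hence `P(|X² - 1| > t) ≤ e^(1 - t / (6L²))` (trivially when
`t ≤ 2L²`). Conversely, the Gaussian density on `(√(1 + u), √(1 + u) + 1]` gives
`P(|g² - 1| > u) ≥ e^(-2 - u) / √(2π)`. Comparing at `u = t / (6L²)` gives `λ = 6` and
`κ = 100 > e³ √(2π)`.
-/

open MeasureTheory ProbabilityTheory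

section Rademacher

variable {Ω : Type*} [MeasurableSpace Ω] {μ : Measure Ω}

lemma ae_abs_eq_one_of_measure_preimage_eq_half [IsProbabilityMeasure μ] {ξ : Ω → ℝ}
    (hξ : Measurable ξ) (h₁ : μ (ξ ⁻¹' {1}) = 1 / 2) (h₂ : μ (ξ ⁻¹' {-1}) = 1 / 2) :
    ∀ᵐ ω ∂μ, |ξ ω| = 1 := by
  have hset : {ω | |ξ ω| = 1} = ξ ⁻¹' {1} ∪ ξ ⁻¹' {-1} := by
    ext ω
    simp [abs_eq zero_le_one]
  have hdisj : Disjoint (ξ ⁻¹' {1}) (ξ ⁻¹' {-1}) :=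
    Disjoint.preimage ξ (Set.disjoint_singleton.2 (by norm_num))
  rw [ae_iff_measure_eq (measurableSet_eq_fun hξ.abs measurable_const).nullMeasurableSet, hset,
    measure_union hdisj (hξ (measurableSet_singleton _)), h₁, h₂, ENNReal.add_halves,
    measure_univ]

lemma measure_setOf_abs_mul_eq {ξ : Ω → ℝ} (hξ : ∀ᵐ ω ∂μ, |ξ ω| = 1) (Y : Ω → ℝ)
    (P : ℝ → Prop) : μ {ω | P |ξ ω * Y ω|} = μ {ω | P |Y ω|} := by
  refine measure_congr ?_
  filter_upwards [hξ] with ω hω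
  change P |ξ ω * Y ω| = P |Y ω|
  rw [abs_mul, hω, one_mul]

end Rademacher

section Subgaussian

variable {Ω : Type*} [MeasurableSpace Ω] {μ : Measure Ω} {X : Ω → ℝ} {L : ℝ}

lemma measure_le_abs_le_two_rpow (hX : Measurable X)
    (hmom : ∀ p : ℝ, 1 ≤ p →
      ∫⁻ ω, ENNReal.ofReal (|X ω| ^ p) ∂μ ≤ ENNReal.ofReal ((L * Real.sqrt p) ^ p))
    (hL : 0 < L) {s : ℝ} (hs : 0 ≤ s) (hsL : 2 * L ^ 2 ≤ s ^ 2) :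
    μ {ω | s ≤ |X ω|} ≤ ENNReal.ofReal (2 ^ (-(s ^ 2 / (4 * L ^ 2)))) := by
  set p := s ^ 2 / (2 * L ^ 2) with hp_def
  have hp : 1 ≤ p := (one_le_div (by positivity)).2 hsL
  have hs₀ : 0 < s := hs.lt_of_ne (by rintro rfl; nlinarith)
  have hLp : L * Real.sqrt p = s / Real.sqrt 2 := by
    have : p = (s / (Real.sqrt 2 * L)) ^ 2 := by
      rw [div_pow, mul_pow, Real.sq_sqrt zero_le_two]
    rw [this, Real.sqrt_sq (by positivity)]
    field_simp
  have hsub : {ω | s ≤ |X ω|} ⊆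
      {ω | ENNReal.ofReal (s ^ p) ≤ ENNReal.ofReal (|X ω| ^ p)} := fun ω hω =>
    ENNReal.ofReal_le_ofReal (Real.rpow_le_rpow hs hω (by positivity))
  calc μ {ω | s ≤ |X ω|}
      ≤ (∫⁻ ω, ENNReal.ofReal (|X ω| ^ p) ∂μ) / ENNReal.ofReal (s ^ p) :=
        (measure_mono hsub).trans <| meas_ge_le_lintegral_div (by fun_prop)
          (by simp only [ne_eq, ENNReal.ofReal_eq_zero, not_le]; positivity) ENNReal.ofReal_ne_top
    _ ≤ ENNReal.ofReal ((L * Real.sqrt p) ^ p) / ENNReal.ofReal (s ^ p) := by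
        gcongr; exact hmom p hp
    _ = ENNReal.ofReal (2 ^ (-(s ^ 2 / (4 * L ^ 2)))) := by
        rw [← ENNReal.ofReal_div_of_pos (by positivity), hLp,
          Real.div_rpow hs (Real.sqrt_nonneg 2), Real.sqrt_eq_rpow, ← Real.rpow_mul zero_le_two,
          Real.rpow_neg zero_le_two, hp_def]
        field_simp
        ring_nf

lemma measure_lt_abs_sq_sub_one_le [IsProbabilityMeasure μ] (hX : Measurable X)
    (hmom : ∀ p : ℝ, 1 ≤ p →
      ∫⁻ ω, ENNReal.ofReal (|X ω| ^ p) ∂μ ≤ ENNReal.ofReal ((L * Real.sqrt p) ^ p))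
    (hL : 1 ≤ L) (t : ℝ) :
    μ {ω | t < |X ω ^ 2 - 1|} ≤ ENNReal.ofReal (Real.exp (1 - t / (6 * L ^ 2))) := by
  have hL₀ : 0 < L := zero_lt_one.trans_le hL
  by_cases ht : t ≤ 2 * L ^ 2
  · calc μ {ω | t < |X ω ^ 2 - 1|} ≤ 1 := prob_le_one
      _ ≤ ENNReal.ofReal (Real.exp (1 - t / (6 * L ^ 2))) := by
        rw [← ENNReal.ofReal_one]
        refine ENNReal.ofReal_le_ofReal (Real.one_le_exp ?_)
        rw [sub_nonneg, div_le_one (by positivity)]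
        nlinarith
  rw [not_le] at ht
  have hsub : {ω | t < |X ω ^ 2 - 1|} ⊆ {ω | Real.sqrt (1 + t) ≤ |X ω|} := by
    intro ω (hω : t < |X ω ^ 2 - 1|)
    have hXsq : 1 + t ≤ X ω ^ 2 := by
      rcases lt_abs.1 hω with h | h
      · linarith
      · nlinarith [sq_nonneg (X ω)]
    show Real.sqrt (1 + t) ≤ |X ω|
    simpa only [Real.sqrt_sq_eq_abs] using Real.sqrt_le_sqrt hXsq
  have hsq : Real.sqrt (1 + t) ^ 2 = 1 + t := Real.sq_sqrt (by nlinarith)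
  calc μ {ω | t < |X ω ^ 2 - 1|}
      ≤ ENNReal.ofReal (2 ^ (-(Real.sqrt (1 + t) ^ 2 / (4 * L ^ 2)))) :=
        (measure_mono hsub).trans <|
          measure_le_abs_le_two_rpow hX hmom hL₀ (Real.sqrt_nonneg _) (by rw [hsq]; linarith)
    _ ≤ ENNReal.ofReal (Real.exp (1 - t / (6 * L ^ 2))) := by
        refine ENNReal.ofReal_le_ofReal ?_
        rw [hsq, Real.rpow_def_of_pos two_pos, Real.exp_le_exp]
        have hlog : 2 / 3 < Real.log 2 := by linarith [Real.log_two_gt_d9]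
        have key : t / (6 * L ^ 2) ≤ Real.log 2 * ((1 + t) / (4 * L ^ 2)) := by
          rw [mul_div_assoc', div_le_div_iff₀ (by positivity) (by positivity)]
          nlinarith [mul_pos ((by positivity : (0 : ℝ) < 2 * L ^ 2).trans ht) (pow_pos hL₀ 2)]
        linarith

end Subgaussian

section Gaussian

lemma gaussianPDFReal_le_of_abs_le {x y : ℝ} (h : |x| ≤ |y|) :
    gaussianPDFReal 0 1 y ≤ gaussianPDFReal 0 1 x := by
  simp only [gaussianPDFReal, sub_zero]
  gcongr _ * Real.exp (-?_ / _)
  exact sq_le_sq.2 h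

lemma ofReal_mul_gaussianPDFReal_le_gaussianReal_Ioc {a b : ℝ} (ha : 0 ≤ a) (hab : a ≤ b) :
    ENNReal.ofReal ((b - a) * gaussianPDFReal 0 1 b) ≤ gaussianReal 0 1 (Set.Ioc a b) := by
  rw [gaussianReal_apply 0 one_ne_zero]
  calc ENNReal.ofReal ((b - a) * gaussianPDFReal 0 1 b)
      = ∫⁻ _ in Set.Ioc a b, ENNReal.ofReal (gaussianPDFReal 0 1 b) := by
        rw [setLIntegral_const, Real.volume_Ioc, ← ENNReal.ofReal_mul' (sub_nonneg.2 hab), mul_comm]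
    _ ≤ ∫⁻ x in Set.Ioc a b, gaussianPDF 0 1 x := by
        refine setLIntegral_mono (measurable_gaussianPDF 0 1) fun x hx => ?_
        refine ENNReal.ofReal_le_ofReal (gaussianPDFReal_le_of_abs_le ?_)
        rw [abs_of_nonneg (ha.trans hx.1.le), abs_of_nonneg (ha.trans hab)]
        exact hx.2

lemma ofReal_exp_le_gaussianReal_lt_abs_sq_sub_one {u : ℝ} (hu : 0 ≤ u) :
    ENNReal.ofReal (Real.exp (-2 - u) / Real.sqrt (2 * Real.pi)) ≤
      gaussianReal 0 1 {x | u < |x ^ 2 - 1|} := by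
  set a := Real.sqrt (1 + u)
  have ha : a ^ 2 = 1 + u := Real.sq_sqrt (by linarith)
  have ha₀ : 0 ≤ a := Real.sqrt_nonneg _
  have hsub : Set.Ioc a (a + 1) ⊆ {x | u < |x ^ 2 - 1|} := by
    rintro x ⟨hax, -⟩
    show u < |x ^ 2 - 1|
    exact (by nlinarith : u < x ^ 2 - 1).trans_le (le_abs_self _)
  refine le_trans ?_ ((ofReal_mul_gaussianPDFReal_le_gaussianReal_Ioc ha₀
    (le_add_of_nonneg_right zero_le_one)).trans (measure_mono hsub))
  refine ENNReal.ofReal_le_ofReal ?_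
  simp only [add_sub_cancel_left, one_mul, gaussianPDFReal, sub_zero, NNReal.coe_one, mul_one]
  rw [div_eq_inv_mul]
  gcongr
  nlinarith

lemma exp_three_mul_sqrt_two_pi_lt : Real.exp 3 * Real.sqrt (2 * Real.pi) < 100 := by
  have he : Real.exp 3 < 20.1 := by
    rw [show (3 : ℝ) = (3 : ℕ) * 1 by norm_num, Real.exp_nat_mul]
    calc Real.exp 1 ^ 3 < 2.7182818286 ^ 3 := by gcongr; exact Real.exp_one_lt_d9
      _ < 20.1 := by norm_num
  have hpi : Real.sqrt (2 * Real.pi) < 2.6 :=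
    (Real.sqrt_lt' (by norm_num)).2 (by nlinarith [Real.pi_lt_d2])
  nlinarith [Real.exp_pos 3, Real.sqrt_nonneg (2 * Real.pi)]

end Gaussian

/-- Strong stochastic domination of a centered squared subgaussian variable
by a centered squared Gaussian. -/
theorem subgauss_dominance :
    ∃ κ : ℝ, 0 < κ ∧ ∃ lam : ℝ, 0 < lam ∧
      ∀ (Ω : Type) [MeasurableSpace Ω] (μ : Measure Ω) [IsProbabilityMeasure μ]
        (X ξ : Ω → ℝ) (L : ℝ), 1 ≤ L →
        Measurable X → Measurable ξ →
        (∫ ω, X ω ^ 2 ∂μ) = 1 →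
        (∀ p : ℝ, 1 ≤ p →
          (∫⁻ ω, ENNReal.ofReal (|X ω| ^ p) ∂μ) ≤
            ENNReal.ofReal ((L * Real.sqrt p) ^ p)) →
        μ (ξ ⁻¹' {1}) = 1 / 2 → μ (ξ ⁻¹' {-1}) = 1 / 2 →
        IndepFun ξ X μ →
        ∀ (Ω' : Type) [MeasurableSpace Ω'] (ν : Measure Ω') [IsProbabilityMeasure ν]
          (g ξ' : Ω' → ℝ),
          Measurable g → Measurable ξ' →
          Measure.map g ν = gaussianReal 0 1 →
          ν (ξ' ⁻¹' {1}) = 1 / 2 → ν (ξ' ⁻¹' {-1}) = 1 / 2 →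
          IndepFun ξ' g ν →
          ∀ t : ℝ, 0 < t →
            μ {ω | t < |ξ ω * (X ω ^ 2 - 1)|} ≤
              ENNReal.ofReal κ * ν {ω | t < lam * L ^ 2 * |ξ' ω * (g ω ^ 2 - 1)|} := by
  refine ⟨100, by norm_num, 6, by norm_num, ?_⟩
  intro Ω _ μ _ X ξ L hL hX hξ _ hmom hξ₁ hξ₂ _ Ω' _ ν _ g ξ' hg hξ' hgmap hξ'₁ hξ'₂ _ t ht
  have hL₀ : 0 < 6 * L ^ 2 := by positivity
  set u := t / (6 * L ^ 2)
  have hν : ν {ω | t < 6 * L ^ 2 * |ξ' ω * (g ω ^ 2 - 1)|} =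
      gaussianReal 0 1 {x | u < |x ^ 2 - 1|} := by
    rw [measure_setOf_abs_mul_eq (ae_abs_eq_one_of_measure_preimage_eq_half hξ' hξ'₁ hξ'₂) _
      (fun a => t < 6 * L ^ 2 * a), ← hgmap, Measure.map_apply hg (by measurability)]
    simp only [u, div_lt_iff₀' hL₀, Set.preimage_ofPred_eq]
  rw [measure_setOf_abs_mul_eq (ae_abs_eq_one_of_measure_preimage_eq_half hξ hξ₁ hξ₂) _
    (t < ·), hν]
  have hc : 0 < Real.exp (-2 - u) / Real.sqrt (2 * Real.pi) := by positivity
  calc μ {ω | t < |X ω ^ 2 - 1|} ≤ ENNReal.ofReal (Real.exp (1 - u)) :=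
        measure_lt_abs_sq_sub_one_le hX hmom hL t
    _ ≤ ENNReal.ofReal (100 * (Real.exp (-2 - u) / Real.sqrt (2 * Real.pi))) := by
        refine ENNReal.ofReal_le_ofReal ?_
        have hsplit : Real.exp (1 - u) =
            Real.exp 3 * Real.sqrt (2 * Real.pi) * (Real.exp (-2 - u) / Real.sqrt (2 * Real.pi)) := by
          rw [mul_assoc, mul_div_cancel₀ _ (by positivity), ← Real.exp_add]
          ring_nf
        rw [hsplit]
        exact mul_le_mul_of_nonneg_right exp_three_mul_sqrt_two_pi_lt.le hc.le
    _ ≤ ENNReal.ofReal 100 * gaussianReal 0 1 {x | u < |x ^ 2 - 1|} := by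
        rw [ENNReal.ofReal_mul (by norm_num)]
        gcongr
        exact ofReal_exp_le_gaussianReal_lt_abs_sq_sub_one (by positivity)
end

section
/- For a symmetric matrix A ∈ ℝ^{n×n}, independent g, ḡ ∼ N(0, Id_n) and p ≥ 1: ‖Σ_{j,k} A_{jk} g_j ḡ_k‖_{L_p} ≤ ‖Σ_{j,k} A_{jk}(g_j g_k − 1_{j=k})‖_{L_p}. -/
/-!
Rotating the pair `(g, ḡ)` by `π / 4` gives `u = (g + ḡ) / √2` and `v = (ḡ - g) / √2`, and
polarization gives `Σ A_jk g_j ḡ_k = (Q u - Q v) / 2` for the centred quadratic form `Q`,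
the constant `tr A` cancelling. Since a centred Gaussian product measure is rotation invariant,
`u` and `v` are again standard Gaussian, and Minkowski's inequality bounds the left-hand norm by
`(‖Q u‖_p + ‖Q v‖_p) / 2 = ‖Q g‖_p`.
-/

open MeasureTheory ProbabilityTheory Finset
open scoped ENNReal Real

section Rotation

variable {E : Type*} [NormedAddCommGroup E] [NormedSpace ℝ E]

lemma ContinuousLinearMap.rotation_pi_div_four_apply (z : E × E) :
    rotation (π / 4) z = ((√2 / 2) • (z.1 + z.2), (√2 / 2) • (z.2 - z.1)) := by
  rw [rotation_apply, Real.cos_pi_div_four, Real.sin_pi_div_four]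
  ext <;> module

lemma ContinuousLinearMap.apply_eq_half_sub_of_rotation (B : E →L[ℝ] E →L[ℝ] ℝ)
    (hB : ∀ x y, B x y = B y x) (c : ℝ) (z : E × E) :
    B z.1 z.2 = ((B (rotation (π / 4) z).1 (rotation (π / 4) z).1 - c)
      - (B (rotation (π / 4) z).2 (rotation (π / 4) z).2 - c)) / 2 := by
  have h2 : √2 * √2 = (2 : ℝ) := Real.mul_self_sqrt zero_le_two
  simp only [rotation_pi_div_four_apply, map_smul, map_add, map_sub, smul_apply, add_apply,
    sub_apply, smul_eq_mul, hB z.2 z.1]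
  linear_combination (-B z.1 z.2 / 2) * h2

variable [MeasurableSpace E] [BorelSpace E] [SecondCountableTopology E] [CompleteSpace E]

theorem IsGaussian.eLpNorm_apply_le_eLpNorm_apply_self_sub (μ : Measure E) [IsGaussian μ]
    (hμ : μ[id] = 0) (B : E →L[ℝ] E →L[ℝ] ℝ) (hB : ∀ x y, B x y = B y x) (c : ℝ)
    {p : ℝ≥0∞} (hp : 1 ≤ p) :
    eLpNorm (fun z : E × E ↦ B z.1 z.2) p (μ.prod μ) ≤ eLpNorm (fun x ↦ B x x - c) p μ := by
  set R := ContinuousLinearMap.rotation (E := E) (π / 4)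
  set Q := fun x ↦ B x x - c
  have hR : MeasurePreserving R (μ.prod μ) (μ.prod μ) :=
    ⟨R.continuous.measurable, IsGaussian.map_rotation_eq_self hμ _⟩
  have hQ : StronglyMeasurable Q :=
    ((B.continuous₂.comp (continuous_id.prodMk continuous_id)).sub
      continuous_const).stronglyMeasurable
  have hQ₁ : eLpNorm (Q ∘ Prod.fst ∘ R) p (μ.prod μ) = eLpNorm Q p μ :=
    eLpNorm_comp_measurePreserving hQ.aestronglyMeasurable (measurePreserving_fst.comp hR)
  have hQ₂ : eLpNorm (Q ∘ Prod.snd ∘ R) p (μ.prod μ) = eLpNorm Q p μ :=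
    eLpNorm_comp_measurePreserving hQ.aestronglyMeasurable (measurePreserving_snd.comp hR)
  have hsplit :
      (fun z : E × E ↦ B z.1 z.2) = (2 : ℝ)⁻¹ • (Q ∘ Prod.fst ∘ R - Q ∘ Prod.snd ∘ R) := by
    ext z
    simp [B.apply_eq_half_sub_of_rotation hB c z, Q, R, div_eq_inv_mul]
  calc eLpNorm (fun z : E × E ↦ B z.1 z.2) p (μ.prod μ)
      = ‖(2 : ℝ)⁻¹‖ₑ * eLpNorm (Q ∘ Prod.fst ∘ R - Q ∘ Prod.snd ∘ R) p (μ.prod μ) := by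
        rw [hsplit, eLpNorm_const_smul]
    _ ≤ ‖(2 : ℝ)⁻¹‖ₑ * (eLpNorm (Q ∘ Prod.fst ∘ R) p (μ.prod μ)
          + eLpNorm (Q ∘ Prod.snd ∘ R) p (μ.prod μ)) := by
        gcongr
        exact eLpNorm_sub_le
          (hQ.comp_measurable (measurable_fst.comp hR.measurable)).aestronglyMeasurable
          (hQ.comp_measurable (measurable_snd.comp hR.measurable)).aestronglyMeasurable hp
    _ = eLpNorm Q p μ := by
        rw [hQ₁, hQ₂, ← two_mul, ← mul_assoc]
        simp [Real.enorm_eq_ofReal_abs, ENNReal.inv_mul_cancel]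

end Rotation

section StdGaussianPi

variable {ι : Type*} [Fintype ι]

lemma pi_gaussianReal_eq_map_stdGaussian :
    Measure.pi (fun _ : ι ↦ gaussianReal 0 1) =
      (stdGaussian (EuclideanSpace ℝ ι)).map (EuclideanSpace.equiv ι ℝ) := by
  rw [← map_pi_eq_stdGaussian, Measure.map_map (by fun_prop) (by fun_prop)]
  exact Measure.map_id.symm

instance isGaussian_pi_gaussianReal : IsGaussian (Measure.pi fun _ : ι ↦ gaussianReal 0 1) := by
  rw [pi_gaussianReal_eq_map_stdGaussian]
  infer_instance

lemma integral_id_pi_gaussianReal : ∫ x, x ∂(Measure.pi fun _ : ι ↦ gaussianReal 0 1) = 0 := by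
  rw [pi_gaussianReal_eq_map_stdGaussian, integral_map (by fun_prop) (by fun_prop),
    ContinuousLinearEquiv.integral_comp_comm, integral_id_stdGaussian, map_zero]

end StdGaussianPi

lemma lintegral_ofReal_abs_rpow_rpow_eq_eLpNorm {α : Type*} [MeasurableSpace α] (μ : Measure α)
    (f : α → ℝ) {p : ℝ} (hp : 0 < p) :
    (∫⁻ x, ENNReal.ofReal (|f x| ^ p) ∂μ) ^ (1 / p) = eLpNorm f (ENNReal.ofReal p) μ := by
  rw [eLpNorm_eq_lintegral_rpow_enorm_toReal (by simpa using hp) ENNReal.ofReal_ne_top,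
    ENNReal.toReal_ofReal hp.le]
  simp_rw [Real.enorm_eq_ofReal_abs, ENNReal.ofReal_rpow_of_nonneg (abs_nonneg _) hp.le]

/-- Reverse Gaussian decoupling for quadratic forms with a symmetric matrix. -/
theorem gauss_reverse_decoupling_order_two (n : ℕ) (A : Matrix (Fin n) (Fin n) ℝ)
    (hA : A.IsSymm) (p : ℝ) (hp : 1 ≤ p) :
    (∫⁻ z, ENNReal.ofReal (|∑ j, ∑ k, A j k * z.1 j * z.2 k| ^ p)
        ∂((Measure.pi fun _ : Fin n => gaussianReal 0 1).prod
          (Measure.pi fun _ : Fin n => gaussianReal 0 1))) ^ (1 / p) ≤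
      (∫⁻ x, ENNReal.ofReal
          (|∑ j, ∑ k, A j k * (x j * x k - if j = k then 1 else 0)| ^ p)
          ∂(Measure.pi fun _ : Fin n => gaussianReal 0 1)) ^ (1 / p) := by
  set B := (Matrix.toBilin' A).toContinuousBilinearMap
  have hpairing : ∀ x y : Fin n → ℝ, ∑ j, ∑ k, A j k * x j * y k = B x y := by
    simp [B, Matrix.toBilin'_apply, mul_comm]
  have hquadratic : ∀ x : Fin n → ℝ,
      ∑ j, ∑ k, A j k * (x j * x k - if j = k then 1 else 0) = B x x - A.trace := by
    intro x
    simp [← hpairing, Matrix.trace, mul_sub, mul_assoc]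
  have hp₀ : 0 < p := zero_lt_one.trans_le hp
  simp_rw [hpairing, hquadratic, lintegral_ofReal_abs_rpow_rpow_eq_eLpNorm _ _ hp₀]
  have hB : ∀ x y, B x y = B y x := fun x y ↦ by
    simpa [B] using (Matrix.isSymm_toBilin'_iff_isSymm.2 hA).eq x y
  exact IsGaussian.eLpNorm_apply_le_eLpNorm_apply_self_sub _ integral_id_pi_gaussianReal B hB _
    (ENNReal.one_le_ofReal.2 hp)
end

section
/- For any array A of coefficients indexed by pairs of multi-indices (i, i′) ∈ ([n₁]×…×[n_d])², and vectors X^{(l)} ∈ ℝ^{n_l}, the identity Σ_{I⊆[d]} Σ_{i,i′ ∈ Π_{l∈I}[n_l]} Σ_{j ∈ Π_{l∈I^c}[n_l]} A_{(i×j)+(i′×j)} Π_{l∈I}[X^{(l)}_{i_l} X^{(l)}_{i′_l} − 1_{i_l=i′_l}] = Σ_{i,i′} A_{i+i′} Π_{l∈[d]} X^{(l)}_{i_l} X^{(l)}_{i′_l} holds, where for each I ⊆ [d] the inner sums are over multi-indices i, i′ on I and a shared multi-index j on the complement I^c. -/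
open Finset

/-- Combine a partial index on `I` with a partial index on the complement of `I`. -/
def combineIdx {d : ℕ} {n : Fin d → ℕ} (I : Finset (Fin d))
    (i : ∀ l : {x : Fin d // x ∈ I}, Fin (n l.1))
    (j : ∀ l : {x : Fin d // x ∉ I}, Fin (n l.1)) : ∀ l, Fin (n l) :=
  fun l => if h : l ∈ I then i ⟨l, h⟩ else j ⟨l, h⟩

lemma combineIdx_mem {d : ℕ} {n : Fin d → ℕ} {I : Finset (Fin d)}
    (i : ∀ l : {x : Fin d // x ∈ I}, Fin (n l.1))
    (j : ∀ l : {x : Fin d // x ∉ I}, Fin (n l.1)) {l : Fin d} (h : l ∈ I) :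
    combineIdx I i j l = i ⟨l, h⟩ := dif_pos h

lemma combineIdx_not_mem {d : ℕ} {n : Fin d → ℕ} {I : Finset (Fin d)}
    (i : ∀ l : {x : Fin d // x ∈ I}, Fin (n l.1))
    (j : ∀ l : {x : Fin d // x ∉ I}, Fin (n l.1)) {l : Fin d} (h : l ∉ I) :
    combineIdx I i j l = j ⟨l, h⟩ := dif_neg h

lemma sum_split {d : ℕ} {n : Fin d → ℕ} (I : Finset (Fin d))
    (f : (∀ l, Fin (n l)) → ℝ) :
    ∑ i : ∀ l, Fin (n l), f i =
      ∑ ip : ∀ l : {x : Fin d // x ∈ I}, Fin (n l.1),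
      ∑ j : ∀ l : {x : Fin d // x ∉ I}, Fin (n l.1), f (combineIdx I ip j) := by
  rw [← Equiv.sum_comp (Equiv.piEquivPiSubtypeProd (· ∈ I) (fun l => Fin (n l))).symm,
    Fintype.sum_prod_type]
  rfl

/-- Deterministic rearrangement of a coupled chaos into centered factors. -/
theorem rearrange_coupled_chaos (d : ℕ) (n : Fin d → ℕ)
    (A : (∀ l, Fin (n l)) → (∀ l, Fin (n l)) → ℝ) (X : ∀ l, Fin (n l) → ℝ) :
    (∑ I : Finset (Fin d),
      ∑ i : ∀ l : {x : Fin d // x ∈ I}, Fin (n l.1),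
      ∑ i' : ∀ l : {x : Fin d // x ∈ I}, Fin (n l.1),
      ∑ j : ∀ l : {x : Fin d // x ∉ I}, Fin (n l.1),
        A (combineIdx I i j) (combineIdx I i' j) *
          ∏ l : {x : Fin d // x ∈ I},
            (X l.1 (i l) * X l.1 (i' l) - if i l = i' l then 1 else 0)) =
    ∑ i : ∀ l, Fin (n l), ∑ i' : ∀ l, Fin (n l),
      A i i' * ∏ l, X l (i l) * X l (i' l) := by
  -- centered/uncentered factor abbreviations
  set F : (∀ l, Fin (n l)) → (∀ l, Fin (n l)) → Fin d → ℝ :=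
    fun i i' l => X l (i l) * X l (i' l) - if i l = i' l then 1 else 0 with hF
  set G : (∀ l, Fin (n l)) → (∀ l, Fin (n l)) → Fin d → ℝ :=
    fun i i' l => if i l = i' l then 1 else 0 with hG
  have keyI : ∀ I : Finset (Fin d),
      (∑ i : ∀ l : {x : Fin d // x ∈ I}, Fin (n l.1),
       ∑ i' : ∀ l : {x : Fin d // x ∈ I}, Fin (n l.1),
       ∑ j : ∀ l : {x : Fin d // x ∉ I}, Fin (n l.1),
         A (combineIdx I i j) (combineIdx I i' j) *
           ∏ l : {x : Fin d // x ∈ I},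
             (X l.1 (i l) * X l.1 (i' l) - if i l = i' l then 1 else 0)) =
      ∑ i : ∀ l, Fin (n l), ∑ i' : ∀ l, Fin (n l),
        A i i' * ((∏ l ∈ I, F i i' l) * ∏ l ∈ univ \ I, G i i' l) := by
    intro I
    conv_rhs => rw [sum_split I]
    refine Finset.sum_congr rfl fun ip _ => ?_
    conv_rhs => rw [Finset.sum_comm]
    conv_rhs => rw [sum_split I]
    refine Finset.sum_congr rfl fun i'p _ => ?_
    conv_rhs => rw [Finset.sum_comm]
    -- now goal: ∑ j, A (c ip j) (c i'p j) * ∏ subtype ...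
    --         = ∑ j1, ∑ j2, A (c ip j1) (c i'p j2) * (∏F * ∏G)
    have hdelta : ∀ (j1 j2 : ∀ l : {x : Fin d // x ∉ I}, Fin (n l.1)),
        (∏ l ∈ univ \ I, G (combineIdx I ip j1) (combineIdx I i'p j2) l) =
          if j1 = j2 then 1 else 0 := by
      intro j1 j2
      by_cases h : j1 = j2
      · subst h
        rw [if_pos rfl]
        refine Finset.prod_eq_one fun l hl => ?_
        have hl' : l ∉ I := (Finset.mem_sdiff.1 hl).2
        simp [hG, combineIdx_not_mem _ _ hl']
      · rw [if_neg h]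
        obtain ⟨l, hl⟩ : ∃ l, j1 l ≠ j2 l := by
          by_contra hc
          push_neg at hc
          exact h (funext hc)
        refine Finset.prod_eq_zero (i := l.1) (Finset.mem_sdiff.2 ⟨Finset.mem_univ _, l.2⟩) ?_
        simp only [hG, combineIdx_not_mem ip j1 l.2, combineIdx_not_mem i'p j2 l.2,
          Subtype.eta]
        rw [if_neg hl]
    refine Finset.sum_congr rfl fun j1 _ => ?_
    have : ∀ j2, A (combineIdx I ip j1) (combineIdx I i'p j2) *
        ((∏ l ∈ I, F (combineIdx I ip j1) (combineIdx I i'p j2) l) *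
          ∏ l ∈ univ \ I, G (combineIdx I ip j1) (combineIdx I i'p j2) l) =
        if j1 = j2 then A (combineIdx I ip j1) (combineIdx I i'p j2) *
          (∏ l ∈ I, F (combineIdx I ip j1) (combineIdx I i'p j2) l) else 0 := by
      intro j2
      rw [hdelta j1 j2]
      by_cases h : j1 = j2 <;> simp [h]
    rw [Finset.sum_congr rfl fun j2 _ => this j2, Fintype.sum_ite_eq]
    congr 1
    rw [Finset.prod_subtype I (fun _ => Iff.rfl)
      (fun l => F (combineIdx I ip j1) (combineIdx I i'p j1) l)]
    refine Finset.prod_congr rfl fun l _ => ?_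
    simp [hF, combineIdx_mem ip j1 l.2, combineIdx_mem i'p j1 l.2, Subtype.eta]
  rw [Fintype.sum_congr _ _ keyI, Finset.sum_comm]
  refine Finset.sum_congr rfl fun i _ => ?_
  rw [Finset.sum_comm]
  refine Finset.sum_congr rfl fun i' _ => ?_
  rw [← Finset.mul_sum]
  congr 1
  have expand : ∀ l : Fin d, X l (i l) * X l (i' l) = F i i' l + G i i' l := by
    intro l; simp [hF, hG]
  calc ∑ I : Finset (Fin d), (∏ l ∈ I, F i i' l) * ∏ l ∈ univ \ I, G i i' l
      = ∑ I ∈ (univ : Finset (Fin d)).powerset,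
          (∏ l ∈ I, F i i' l) * ∏ l ∈ univ \ I, G i i' l := by
        rw [Finset.powerset_univ]
    _ = ∏ l, (F i i' l + G i i' l) := (Finset.prod_add _ _ _).symm
    _ = ∏ l, X l (i l) * X l (i' l) := Finset.prod_congr rfl fun l _ => (expand l).symm
end

section
/- Let A be an order-d array with entries A_{i₁,…,i_d}, and let I₁,…,I_κ be a partition of [d] with I_κ = Ī_κ ∪ Ī_{κ+1} a further partition into two nonempty sets. Then ‖A‖_{I₁,…,I_{κ−1},Ī_κ,Ī_{κ+1}} ≤ ‖A‖_{I₁,…,I_κ} ≤ √(min{Π_{l∈Ī_κ} n_l, Π_{l∈Ī_{κ+1}} n_l}) · ‖A‖_{I₁,…,I_{κ−1},Ī_κ,Ī_{κ+1}}. -/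
open Finset

/-- The partition norm `‖A‖_{I₁,…,I_κ}` of an array `A`, where the partition of the
axes `ι` into blocks `β` is encoded by the assignment map `c : ι → β`: the supremum
of contractions of `A` against unit-Frobenius-norm partial arrays, one per block. -/
noncomputable def partitionNorm {ι : Type*} [Fintype ι] [DecidableEq ι] (n : ι → ℕ)
    {β : Type*} [Fintype β] [DecidableEq β]
    (A : (∀ l, Fin (n l)) → ℝ) (c : ι → β) : ℝ :=
  sSup {r : ℝ | ∃ α : ∀ m : β, (∀ l : {x : ι // c x = m}, Fin (n l.1)) → ℝ,
    (∀ m, (∑ j, α m j ^ 2) = 1) ∧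
      r = ∑ i, A i * ∏ m, α m fun l => i l.1}

/-!
Coarsening a partition can only increase the norm, because the tensor product of unit partial
arrays on several blocks is a unit partial array on their union.

For the reverse bound, fix unit partial arrays on all blocks other than the merged one. The
contraction becomes `∑ x y, M x y * G x y`, where `x` and `y` run over the multi-indices of the two
halves `Ī_κ`, `Ī_{κ+1}` and `G` is the merged partial array, reshaped; by Cauchy–Schwarz it is at
most `‖M‖_F`. Pairing `M` with a rank-one `u ⊗ v` is a contraction for the finer partition, so
every row and every column of `M` has norm at most the finer norm `R`, and
`‖M‖_F² ≤ min(#rows, #columns) · R²`.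
-/

section UnitVectors

variable {X Y : Type*} [Fintype X] [Fintype Y]

theorem abs_le_one_of_sum_sq_eq_one {f : X → ℝ}
    (h : ∑ x, f x ^ 2 = 1) (x : X) : |f x| ≤ 1 :=
  (sq_le_one_iff_abs_le_one _).1 <| h ▸ Finset.single_le_sum (fun _ _ => sq_nonneg _) (mem_univ x)

theorem sum_sq_le_sq_of_forall_sum_mul_le {w : X → ℝ} {R : ℝ}
    (h : ∀ u : X → ℝ, ∑ x, u x ^ 2 = 1 → ∑ x, w x * u x ≤ R) : ∑ x, w x ^ 2 ≤ R ^ 2 := by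
  have hs : 0 ≤ ∑ x, w x ^ 2 := by positivity
  rcases hs.eq_or_lt with h0 | h0
  · rw [← h0]; positivity
  set t := √(∑ x, w x ^ 2)
  have ht : 0 < t := Real.sqrt_pos.2 h0
  have htt : t ^ 2 = ∑ x, w x ^ 2 := Real.sq_sqrt hs
  have hunit : ∑ x, (w x / t) ^ 2 = 1 := by
    simp_rw [div_pow, ← Finset.sum_div, htt, div_self h0.ne']
  have hval : ∑ x, w x * (w x / t) = t := by
    simp_rw [mul_div_assoc', ← sq, ← Finset.sum_div, ← htt]
    field_simp
  rw [← htt]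
  exact pow_le_pow_left₀ ht.le (hval ▸ h _ hunit) 2

theorem sum_sum_sq_le_card_mul_sq {M : X → Y → ℝ} {R : ℝ}
    (h : ∀ (u : X → ℝ) (v : Y → ℝ), ∑ x, u x ^ 2 = 1 → ∑ y, v y ^ 2 = 1 →
      ∑ x, ∑ y, M x y * (u x * v y) ≤ R) :
    ∑ x, ∑ y, M x y ^ 2 ≤ Fintype.card Y * R ^ 2 := by
  classical
  rw [Finset.sum_comm, ← nsmul_eq_mul, ← Finset.card_univ, ← Finset.sum_const]
  refine Finset.sum_le_sum fun y _ => sum_sq_le_sq_of_forall_sum_mul_le fun u hu => ?_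
  simpa [Pi.single_apply, mul_comm] using h u (Pi.single y 1) hu (by simp [Pi.single_apply])

theorem sum_sum_mul_le_sqrt_min_card_mul {M G : X → Y → ℝ} {R : ℝ} (hR : 0 ≤ R)
    (h : ∀ (u : X → ℝ) (v : Y → ℝ), ∑ x, u x ^ 2 = 1 → ∑ y, v y ^ 2 = 1 →
      ∑ x, ∑ y, M x y * (u x * v y) ≤ R)
    (hG : ∑ x, ∑ y, G x y ^ 2 = 1) :
    ∑ x, ∑ y, M x y * G x y ≤ √(min (Fintype.card X : ℝ) (Fintype.card Y)) * R := by
  have hX : ∑ x, ∑ y, M x y ^ 2 ≤ Fintype.card X * R ^ 2 := by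
    rw [Finset.sum_comm]
    refine sum_sum_sq_le_card_mul_sq (M := fun y x => M x y) fun v u hv hu => ?_
    rw [Finset.sum_comm]
    simpa only [mul_comm (v _)] using h u v hu hv
  have hY := sum_sum_sq_le_card_mul_sq h
  calc ∑ x, ∑ y, M x y * G x y = ∑ z : X × Y, M z.1 z.2 * G z.1 z.2 :=
        (Fintype.sum_prod_type' _).symm
    _ ≤ √(∑ z : X × Y, M z.1 z.2 ^ 2) * √(∑ z : X × Y, G z.1 z.2 ^ 2) :=
        Real.sum_mul_le_sqrt_mul_sqrt _ _ _
    _ = √(∑ x, ∑ y, M x y ^ 2) := by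
        simp only [Fintype.sum_prod_type, hG, Real.sqrt_one, mul_one]
    _ ≤ √(min (Fintype.card X : ℝ) (Fintype.card Y) * R ^ 2) :=
        Real.sqrt_le_sqrt (min_mul_of_nonneg _ _ (sq_nonneg R) ▸ le_min hX hY)
    _ = √(min (Fintype.card X : ℝ) (Fintype.card Y)) * R := by
        rw [Real.sqrt_mul' _ (sq_nonneg R), Real.sqrt_sq hR]

end UnitVectors

theorem sum_mul_eq_sum_sum_fiber {I X Y R : Type*} [Fintype I] [Fintype X] [Fintype Y]
    [DecidableEq X] [DecidableEq Y] [CommSemiring R] (f : I → R) (g : I → X) (h : I → Y)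
    (H : X → Y → R) :
    ∑ i, f i * H (g i) (h i) = ∑ x, ∑ y, (∑ i with g i = x ∧ h i = y, f i) * H x y := by
  rw [← Fintype.sum_prod_type', ← Finset.sum_fiberwise Finset.univ fun i => (g i, h i)]
  refine Finset.sum_congr rfl fun ⟨x, y⟩ _ => ?_
  rw [Finset.sum_mul]
  refine Finset.sum_congr (by ext; simp) fun i hi => ?_
  obtain ⟨rfl, rfl⟩ := (Finset.mem_filter.1 hi).2
  rfl

abbrev BlockIndex {ι β : Type*} (n : ι → ℕ) (c : ι → β) (m : β) : Type _ :=
  ∀ l : {x : ι // c x = m}, Fin (n l.1)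

theorem card_blockIndex {ι β : Type*} [Fintype ι] [DecidableEq ι] [DecidableEq β] (n : ι → ℕ)
    (c : ι → β) (m : β) :
    (Fintype.card (BlockIndex n c m) : ℝ) = ∏ l with c l = m, (n l : ℝ) := by
  simp only [Fintype.card_pi, Fintype.card_fin, Nat.cast_prod]
  exact (Finset.prod_subtype _ (fun l => by simp) fun l => (n l : ℝ)).symm

section PartitionNorm

variable {ι β : Type*} [Fintype ι] [DecidableEq ι] [Fintype β] [DecidableEq β] (n : ι → ℕ)
  (A : (∀ l, Fin (n l)) → ℝ)

theorem le_partitionNorm {c : ι → β} {α : ∀ m, BlockIndex n c m → ℝ}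
    (hα : ∀ m, ∑ j, α m j ^ 2 = 1) :
    ∑ i, A i * ∏ m, α m (fun l => i l.1) ≤ partitionNorm n A c := by
  refine le_csSup ⟨∑ i, |A i|, ?_⟩ ⟨α, hα, rfl⟩
  rintro _ ⟨α, hα, rfl⟩
  refine Finset.sum_le_sum fun i _ => ?_
  calc A i * ∏ m, α m (fun l => i l.1)
      ≤ |A i| * ∏ m, |α m (fun l => i l.1)| := by
        rw [← Finset.abs_prod, ← abs_mul]; exact le_abs_self _
    _ ≤ |A i| := mul_le_of_le_one_right (abs_nonneg _) <|
        Finset.prod_le_one (fun _ _ => abs_nonneg _) fun m _ => abs_le_one_of_sum_sq_eq_one (hα m) _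

theorem partitionNorm_le {c : ι → β} {R : ℝ} (hR : 0 ≤ R)
    (h : ∀ α : ∀ m, BlockIndex n c m → ℝ, (∀ m, ∑ j, α m j ^ 2 = 1) →
      ∑ i, A i * ∏ m, α m (fun l => i l.1) ≤ R) :
    partitionNorm n A c ≤ R :=
  Real.sSup_le (by rintro _ ⟨α, hα, rfl⟩; exact h α hα) hR

theorem partitionNorm_nonneg [Nonempty β] (c : ι → β) : 0 ≤ partitionNorm n A c := by
  by_cases hunit : ∃ α : ∀ m, BlockIndex n c m → ℝ, ∀ m, ∑ j, α m j ^ 2 = 1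
  · obtain ⟨α, hα⟩ := hunit
    obtain ⟨b⟩ := ‹Nonempty β›
    -- flipping the sign of the block `b` negates the contraction
    let s : β → ℝ := fun m => if m = b then -1 else 1
    have hs : ∀ m, s m ^ 2 = 1 := fun m => by by_cases h : m = b <;> simp [s, h]
    have hflip := le_partitionNorm n A (α := fun m j => s m * α m j) fun m => by
      simp only [mul_pow, hs, one_mul, hα]
    have hprod : ∀ i : ∀ l, Fin (n l), ∏ m, s m * α m (fun l => i l.1) =
        -∏ m, α m (fun l => i l.1) := fun i => by
      rw [Finset.prod_mul_distrib, Finset.prod_ite_eq' univ b]; simp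
    simp only [hprod, mul_neg, Finset.sum_neg_distrib] at hflip
    linarith [le_partitionNorm n A hα]
  · exact Real.sSup_nonneg fun _ ⟨α, hα, _⟩ => absurd ⟨α, hα⟩ hunit

end PartitionNorm

section Coarsening

variable {ι β γ : Type*} [Fintype ι] [DecidableEq ι] [Fintype β] [DecidableEq β] [Fintype γ]
  [DecidableEq γ] (n : ι → ℕ) (A : (∀ l, Fin (n l)) → ℝ)

def coarseEquiv (c : ι → β) (p : β → γ) (m' : γ) :
    BlockIndex n (p ∘ c) m' ≃ ∀ b : {b // p b = m'}, BlockIndex n c b.1 where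
  toFun j b l := j ⟨l.1, by simp [l.2, b.2]⟩
  invFun g l := g ⟨c l.1, l.2⟩ ⟨l.1, rfl⟩
  left_inv j := rfl
  right_inv g := by
    funext ⟨b, hb⟩ ⟨l, hl⟩
    dsimp only at hl
    subst hl
    rfl

theorem partitionNorm_le_comp [Nonempty β] (c : ι → β) (p : β → γ) :
    partitionNorm n A c ≤ partitionNorm n A (p ∘ c) := by
  have : Nonempty γ := .map p ‹_›
  refine partitionNorm_le n A (partitionNorm_nonneg n A _) fun α hα => ?_
  let α' : ∀ m', BlockIndex n (p ∘ c) m' → ℝ := fun m' j =>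
    ∏ b : {b // p b = m'}, α b.1 (coarseEquiv n c p m' j b)
  have hα' : ∀ m', ∑ j, α' m' j ^ 2 = 1 := fun m' => by
    simp only [α', ← Finset.prod_pow]
    rw [(coarseEquiv n c p m').sum_comp fun g => ∏ b, α b.1 (g b) ^ 2,
      ← Fintype.prod_sum fun (b : {b // p b = m'}) j => α b.1 j ^ 2]
    simp [hα]
  convert le_partitionNorm n A hα' using 3 with i
  exact (Fintype.prod_fiberwise p fun b => α b fun l => i l.1).symm

end Coarsening

structure IsMerge {β γ : Type*} (p : β → γ) (b₁ b₂ : β) : Prop where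
  ne : b₁ ≠ b₂
  apply_eq_iff : ∀ b, p b = p b₁ ↔ b = b₁ ∨ b = b₂
  injOn : Set.InjOn p {b₁, b₂}ᶜ
  surjective : Function.Surjective p

namespace IsMerge

variable {β γ : Type*} {p : β → γ} {b₁ b₂ : β}

theorem apply_eq_apply_iff (hp : IsMerge p b₁ b₂) {m : β} (h₁ : m ≠ b₁) (h₂ : m ≠ b₂) (b : β) :
    p b = p m ↔ b = m := by
  refine ⟨fun h => ?_, congrArg p⟩
  by_cases hb : b = b₁ ∨ b = b₂
  · have := (hp.apply_eq_iff m).1 (h.symm.trans ((hp.apply_eq_iff b).2 hb))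
    tauto
  · exact hp.injOn (by simpa using hb) (by simp [h₁, h₂]) h

theorem prod_eq [Fintype β] [DecidableEq β] [Fintype γ] [DecidableEq γ] {M : Type*}
    [CommMonoid M] (hp : IsMerge p b₁ b₂) (f : γ → M) :
    ∏ m', f m' = f (p b₁) * ∏ m ∈ {b₁, b₂}ᶜ, f (p m) := by
  have himage : ({b₁, b₂}ᶜ : Finset β).image p = univ.erase (p b₁) := by
    ext m'
    obtain ⟨b, rfl⟩ := hp.surjective m'
    simp only [mem_image, mem_compl, mem_insert, mem_singleton, mem_erase, mem_univ, and_true]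
    constructor
    · rintro ⟨a, ha, hab⟩
      rw [← hab, Ne, hp.apply_eq_iff]
      exact ha
    · intro hb
      exact ⟨b, fun h => hb ((hp.apply_eq_iff b).2 h), rfl⟩
  rw [← Finset.mul_prod_erase univ f (mem_univ (p b₁)), ← himage,
    Finset.prod_image (by rw [coe_compl, coe_pair]; exact hp.injOn)]

end IsMerge

section Merge

variable {ι β γ : Type*} [DecidableEq β] (n : ι → ℕ) (c : ι → β) {p : β → γ} {b₁ b₂ : β}

def mergeEquiv (hp : IsMerge p b₁ b₂) :
    BlockIndex n c b₁ × BlockIndex n c b₂ ≃ BlockIndex n (p ∘ c) (p b₁) where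
  toFun z l := if h : c l.1 = b₁ then z.1 ⟨l.1, h⟩
    else z.2 ⟨l.1, ((hp.apply_eq_iff _).1 l.2).resolve_left h⟩
  invFun j := (fun l => j ⟨l.1, by simp [l.2]⟩,
    fun l => j ⟨l.1, by simp [l.2, (hp.apply_eq_iff b₂).2 (.inr rfl)]⟩)
  left_inv z :=
    Prod.ext (funext fun l => dif_pos l.2)
      (funext fun l => dif_neg fun h => hp.ne (h.symm.trans l.2))
  right_inv j := by
    funext l
    dsimp only
    split <;> rfl

theorem mergeEquiv_restrict (hp : IsMerge p b₁ b₂) (i : ∀ l, Fin (n l)) :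
    mergeEquiv n c hp ((fun l => i l.1), fun l => i l.1) =
      (fun l => i l.1 : BlockIndex n (p ∘ c) (p b₁)) := by
  funext l
  simp [mergeEquiv]

def blockEquiv (hp : IsMerge p b₁ b₂) {m : β} (h₁ : m ≠ b₁) (h₂ : m ≠ b₂) :
    BlockIndex n c m ≃ BlockIndex n (p ∘ c) (p m) where
  toFun j l := j ⟨l.1, (hp.apply_eq_apply_iff h₁ h₂ _).1 l.2⟩
  invFun j l := j ⟨l.1, congrArg p l.2⟩
  left_inv _ := rfl
  right_inv _ := rfl

def splitFamily (hp : IsMerge p b₁ b₂) (α' : ∀ m', BlockIndex n (p ∘ c) m' → ℝ)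
    (u : BlockIndex n c b₁ → ℝ) (v : BlockIndex n c b₂ → ℝ) (m : β) (j : BlockIndex n c m) : ℝ :=
  if h₁ : m = b₁ then u fun l => j ⟨l.1, l.2.trans h₁.symm⟩
  else if h₂ : m = b₂ then v fun l => j ⟨l.1, l.2.trans h₂.symm⟩
  else α' (p m) (blockEquiv n c hp h₁ h₂ j)

theorem sum_sq_splitFamily [Fintype ι] [DecidableEq ι] [DecidableEq γ] (hp : IsMerge p b₁ b₂)
    {α' : ∀ m', BlockIndex n (p ∘ c) m' → ℝ}
    (hα' : ∀ m', ∑ j, α' m' j ^ 2 = 1) {u : BlockIndex n c b₁ → ℝ} {v : BlockIndex n c b₂ → ℝ}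
    (hu : ∑ x, u x ^ 2 = 1) (hv : ∑ y, v y ^ 2 = 1) (m : β) :
    ∑ j, splitFamily n c hp α' u v m j ^ 2 = 1 := by
  by_cases h₁ : m = b₁
  · subst h₁
    simpa [splitFamily] using hu
  by_cases h₂ : m = b₂
  · subst h₂
    simpa [splitFamily, h₁] using hv
  simp only [splitFamily, h₁, h₂, dite_false]
  rw [(blockEquiv n c hp h₁ h₂).sum_comp fun j => α' (p m) j ^ 2]
  exact hα' _

theorem prod_splitFamily [Fintype β] (hp : IsMerge p b₁ b₂)
    (α' : ∀ m', BlockIndex n (p ∘ c) m' → ℝ)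
    (u : BlockIndex n c b₁ → ℝ) (v : BlockIndex n c b₂ → ℝ) (i : ∀ l, Fin (n l)) :
    ∏ m, splitFamily n c hp α' u v m (fun l => i l.1) =
      u (fun l => i l.1) * v (fun l => i l.1) * ∏ m ∈ {b₁, b₂}ᶜ, α' (p m) fun l => i l.1 := by
  rw [← Finset.prod_mul_prod_compl {b₁, b₂}, Finset.prod_pair hp.ne]
  congr 1
  · simp [splitFamily, hp.ne.symm]
  · refine Finset.prod_congr rfl fun m hm => ?_
    obtain ⟨h₁, h₂⟩ : m ≠ b₁ ∧ m ≠ b₂ := by simpa using hm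
    simp only [splitFamily, h₁, h₂, dite_false]
    rfl

theorem partitionNorm_comp_le [Fintype ι] [DecidableEq ι] [Fintype β] [Fintype γ] [DecidableEq γ]
    (A : (∀ l, Fin (n l)) → ℝ) (hp : IsMerge p b₁ b₂) :
    partitionNorm n A (p ∘ c) ≤
      √(min (Fintype.card (BlockIndex n c b₁) : ℝ) (Fintype.card (BlockIndex n c b₂))) *
        partitionNorm n A c := by
  have : Nonempty β := ⟨b₁⟩
  have hR := partitionNorm_nonneg n A c
  refine partitionNorm_le n A (by positivity) fun α' hα' => ?_
  set F : (∀ l, Fin (n l)) → ℝ := fun i => A i * ∏ m ∈ {b₁, b₂}ᶜ, α' (p m) fun l => i l.1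
  set M : BlockIndex n c b₁ → BlockIndex n c b₂ → ℝ := fun x y =>
    ∑ i with (fun l => i l.1) = x ∧ (fun l => i l.1) = y, F i
  have hexpand : ∀ H : BlockIndex n c b₁ → BlockIndex n c b₂ → ℝ,
      ∑ i, F i * H (fun l => i l.1) (fun l => i l.1) = ∑ x, ∑ y, M x y * H x y :=
    sum_mul_eq_sum_sum_fiber F _ _
  have hM : ∀ (u : BlockIndex n c b₁ → ℝ) (v : BlockIndex n c b₂ → ℝ),
      ∑ x, u x ^ 2 = 1 → ∑ y, v y ^ 2 = 1 →
        ∑ x, ∑ y, M x y * (u x * v y) ≤ partitionNorm n A c := by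
    intro u v hu hv
    rw [← hexpand]
    convert le_partitionNorm n A (sum_sq_splitFamily n c hp hα' hu hv) using 2 with i
    rw [prod_splitFamily]
    ring
  have hG : ∑ x, ∑ y, α' (p b₁) (mergeEquiv n c hp (x, y)) ^ 2 = 1 := by
    rw [← Fintype.sum_prod_type', (mergeEquiv n c hp).sum_comp fun j => α' (p b₁) j ^ 2]
    exact hα' _
  calc ∑ i, A i * ∏ m', α' m' (fun l => i l.1)
      = ∑ i, F i * α' (p b₁) (mergeEquiv n c hp ((fun l => i l.1), fun l => i l.1)) := by
        simp only [hp.prod_eq, mergeEquiv_restrict, F]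
        exact Finset.sum_congr rfl fun i _ => by ring
    _ = ∑ x, ∑ y, M x y * α' (p b₁) (mergeEquiv n c hp (x, y)) :=
        hexpand fun x y => α' (p b₁) (mergeEquiv n c hp (x, y))
    _ ≤ _ := sum_sum_mul_le_sqrt_min_card_mul hR hM hG

end Merge

def mergeLast (κ : ℕ) (hκ : 0 < κ) : Fin (κ + 1) → Fin κ :=
  fun m => if h : (m : ℕ) < κ then ⟨m, h⟩ else ⟨κ - 1, Nat.sub_one_lt_of_lt hκ⟩

theorem val_mergeLast {κ : ℕ} (hκ : 0 < κ) (m : Fin (κ + 1)) :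
    (mergeLast κ hκ m : ℕ) = min (m : ℕ) (κ - 1) := by
  unfold mergeLast
  split_ifs <;> simp <;> omega

theorem isMerge_mergeLast {κ : ℕ} (hκ : 0 < κ) :
    IsMerge (mergeLast κ hκ) ⟨κ - 1, Nat.sub_lt_succ κ 1⟩ (Fin.last κ) where
  ne := by simp [Fin.ext_iff]; omega
  apply_eq_iff b := by simp only [Fin.ext_iff, val_mergeLast, Fin.val_last]; omega
  injOn a ha b hb hab := by
    simp only [Set.mem_compl_iff, Set.mem_insert_iff, Set.mem_singleton_iff, Fin.ext_iff,
      Fin.val_last] at ha hb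
    simp only [Fin.ext_iff, val_mergeLast] at hab ⊢
    omega
  surjective m' := ⟨m'.castSucc, Fin.ext (by simp [val_mergeLast]; omega)⟩

/-- Comparing the partition norms associated to a partition `I₁,…,I_{κ-1}, Ī_κ, Ī_{κ+1}`
(encoded by `c : Fin d → Fin (κ+1)`, with the blocks `κ-1` and `κ` of `c` being
`Ī_κ` and `Ī_{κ+1}`) and its coarsening where `Ī_κ` and `Ī_{κ+1}` are joined. -/
theorem partition_norm_join_split (d κ : ℕ) (hκ : 0 < κ) (n : Fin d → ℕ)
    (A : (∀ l, Fin (n l)) → ℝ) (c : Fin d → Fin (κ + 1)) :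
    partitionNorm n A c ≤
      partitionNorm n A
        ((fun m : Fin (κ + 1) =>
          if h : (m : ℕ) < κ then (⟨m, h⟩ : Fin κ) else ⟨κ - 1, by omega⟩) ∘ c) ∧
    partitionNorm n A
        ((fun m : Fin (κ + 1) =>
          if h : (m : ℕ) < κ then (⟨m, h⟩ : Fin κ) else ⟨κ - 1, by omega⟩) ∘ c) ≤
      Real.sqrt (min (∏ l ∈ Finset.univ.filter fun l => (c l : ℕ) = κ - 1, (n l : ℝ))
          (∏ l ∈ Finset.univ.filter fun l => (c l : ℕ) = κ, (n l : ℝ))) *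
        partitionNorm n A c := by
  have key := partitionNorm_comp_le n c A (isMerge_mergeLast hκ)
  simp only [card_blockIndex, Fin.ext_iff, Fin.val_last] at key
  exact ⟨partitionNorm_le_comp n A c (mergeLast κ hκ), key⟩
end

section
/- Let A ∈ ℝ^{n^{d}×n^{d}} be a matrix regarded as an order-2d array via Kronecker-index rearrangement. If A^{[I]} is obtained from A by zeroing all entries whose index pairs (i_l, i_{l+d}) differ for some l ∈ I, then for any partition I₁,…,I_κ of [2d], ‖A^{[I]}‖_{I₁,…,I_κ} ≤ ‖A‖_{I₁,…,I_κ}. -/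
/-!
Sign averaging. For a sign vector `ε`, multiplying `A` entrywise by `ε (i p) * ε (i q)` amounts
to flipping signs inside the unit vectors of the blocks that contain the axes `p` and `q`, so it
is bounded in partition norm by `‖A‖`. By orthogonality of the characters `ε ↦ ε a`, the average
of these arrays over all `ε` is exactly `A` with the entries `i p ≠ i q` zeroed; and the
partition norm, a supremum of linear functionals of `A`, is convex. Restricting one pair of
axes `(l, l + d)` at a time gives the theorem.
-/

open Finset

-- Signs are indexed by all of `ℕ` (and are `1` from `N` on), so one `ε` acts on axes of
-- different lengths.
noncomputable def signAt {N : ℕ} (ε : Fin N → ℤˣ) (k : ℕ) : ℝ :=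
  if h : k < N then ((ε ⟨k, h⟩ : ℤ) : ℝ) else 1

lemma signAt_mul_self {N : ℕ} (ε : Fin N → ℤˣ) (k : ℕ) : signAt ε k * signAt ε k = 1 := by
  unfold signAt
  split_ifs
  · rw [← Int.cast_mul, ← Units.val_mul, Int.units_mul_self, Units.val_one, Int.cast_one]
  · exact one_mul 1

lemma sum_signAt_mul_signAt {N a b : ℕ} (ha : a < N) (hb : b < N) :
    ∑ ε : Fin N → ℤˣ, signAt ε a * signAt ε b = if a = b then 2 ^ N else 0 := by
  split_ifs with hab
  · subst hab
    simp [signAt_mul_self, Fintype.card_units_int]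
  -- Flipping the sign of the `a`-th coordinate negates every term.
  set g : Fin N → ℤˣ := Pi.mulSingle ⟨a, ha⟩ (-1)
  have hga : ∀ ε, signAt (g * ε) a = -signAt ε a := fun ε => by
    simp [signAt, ha, g]
  have hgb : ∀ ε, signAt (g * ε) b = signAt ε b := fun ε => by
    have hne : (⟨b, hb⟩ : Fin N) ≠ ⟨a, ha⟩ := fun h => hab (Fin.mk.inj h).symm
    simp [signAt, hb, g, Pi.mulSingle_eq_of_ne hne]
  have hneg := Equiv.sum_comp (Equiv.mulLeft g) fun ε => signAt ε a * signAt ε b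
  simp only [Equiv.coe_mulLeft, hga, hgb, neg_mul, sum_neg_distrib] at hneg
  linarith

lemma abs_le_one_of_sum_sq_eq_one_s14 {κ : Type*} [Fintype κ] {v : κ → ℝ}
    (hv : ∑ j, v j ^ 2 = 1) (j : κ) : |v j| ≤ 1 := by
  rw [← sq_le_one_iff_abs_le_one, ← hv]
  exact single_le_sum (f := fun j => v j ^ 2) (fun j _ => sq_nonneg _) (mem_univ j)

section PartitionNorm

variable {ι : Type*} [Fintype ι] [DecidableEq ι] {n : ι → ℕ} {β : Type*} [Fintype β]

noncomputable def partitionForm (A : (∀ l, Fin (n l)) → ℝ) (c : ι → β)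
    (α : ∀ m : β, (∀ l : {x : ι // c x = m}, Fin (n l.1)) → ℝ) : ℝ :=
  ∑ i, A i * ∏ m, α m fun l => i l.1

variable {c : ι → β} {α : ∀ m : β, (∀ l : {x : ι // c x = m}, Fin (n l.1)) → ℝ}

lemma partitionForm_average_le {κ : Type*} [Fintype κ] [Nonempty κ]
    (B : κ → (∀ l, Fin (n l)) → ℝ) {M : ℝ} (hB : ∀ k, partitionForm (B k) c α ≤ M) :
    partitionForm (fun i => (Fintype.card κ : ℝ)⁻¹ * ∑ k, B k i) c α ≤ M := by
  have hcard : (0 : ℝ) < Fintype.card κ := by exact_mod_cast Fintype.card_pos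
  calc partitionForm (fun i => (Fintype.card κ : ℝ)⁻¹ * ∑ k, B k i) c α
      = (Fintype.card κ : ℝ)⁻¹ * ∑ k, partitionForm (B k) c α := by
        simp only [partitionForm, mul_sum, sum_mul, mul_assoc]
        exact sum_comm
    _ ≤ (Fintype.card κ : ℝ)⁻¹ * ∑ _k : κ, M := by gcongr; exact hB _
    _ = M := by rw [sum_const, card_univ, nsmul_eq_mul, inv_mul_cancel_left₀ hcard.ne']

variable [DecidableEq β]

lemma partitionForm_le_sum_abs (A : (∀ l, Fin (n l)) → ℝ) (hα : ∀ m, ∑ j, α m j ^ 2 = 1) :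
    partitionForm A c α ≤ ∑ i, |A i| := by
  refine sum_le_sum fun i _ => (le_abs_self _).trans ?_
  rw [abs_mul, abs_prod]
  exact mul_le_of_le_one_right (abs_nonneg _) <|
    prod_le_one (fun m _ => abs_nonneg _) fun m _ => abs_le_one_of_sum_sq_eq_one_s14 (hα m) _

lemma partitionForm_le_partitionNorm (A : (∀ l, Fin (n l)) → ℝ)
    (hα : ∀ m, ∑ j, α m j ^ 2 = 1) : partitionForm A c α ≤ partitionNorm n A c := by
  refine le_csSup ⟨∑ i, |A i|, ?_⟩ ⟨α, hα, rfl⟩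
  rintro r ⟨α', hα', rfl⟩
  exact partitionForm_le_sum_abs A hα'

lemma partitionNorm_le_of_partitionForm_le {A B : (∀ l, Fin (n l)) → ℝ}
    (h : ∀ α : ∀ m : β, (∀ l : {x : ι // c x = m}, Fin (n l.1)) → ℝ,
      (∀ m, ∑ j, α m j ^ 2 = 1) → partitionForm A c α ≤ partitionNorm n B c) :
    partitionNorm n A c ≤ partitionNorm n B c := by
  by_cases hunit : ∃ α : ∀ m : β, (∀ l : {x : ι // c x = m}, Fin (n l.1)) → ℝ,
      ∀ m, ∑ j, α m j ^ 2 = 1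
  · obtain ⟨α, hα⟩ := hunit
    refine csSup_le ⟨_, α, hα, rfl⟩ ?_
    rintro r ⟨α', hα', rfl⟩
    exact h α' hα'
  · have hempty : ∀ C : (∀ l, Fin (n l)) → ℝ, partitionNorm n C c = 0 := fun C => by
      unfold partitionNorm
      convert Real.sSup_empty using 2
      refine Set.eq_empty_of_forall_notMem ?_
      rintro r ⟨α, hα, -⟩
      exact hunit ⟨α, hα⟩
    rw [hempty, hempty]

lemma partitionForm_mul_signs_le_partitionNorm (A : (∀ l, Fin (n l)) → ℝ)
    (s : ∀ l, Fin (n l) → ℝ) (hs : ∀ l x, s l x * s l x = 1) (hα : ∀ m, ∑ j, α m j ^ 2 = 1) :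
    partitionForm (fun i => A i * ∏ l, s l (i l)) c α ≤ partitionNorm n A c := by
  set α' : ∀ m : β, (∀ l : {x : ι // c x = m}, Fin (n l.1)) → ℝ :=
    fun m x => (∏ l, s l.1 (x l)) * α m x
  have hα' : ∀ m, ∑ j, α' m j ^ 2 = 1 := fun m => by
    rw [← hα m]
    refine sum_congr rfl fun x _ => ?_
    rw [sq, sq, mul_mul_mul_comm, ← prod_mul_distrib]
    simp only [hs, prod_const_one, one_mul]
  convert partitionForm_le_partitionNorm A hα' using 1
  refine sum_congr rfl fun i _ => ?_
  simp only [α', prod_mul_distrib, Fintype.prod_fiberwise c fun l => s l (i l)]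
  ring

theorem partitionNorm_restrict_diagonal_le (A : (∀ l, Fin (n l)) → ℝ) (c : ι → β) (p q : ι) :
    partitionNorm n (fun i => if (i p : ℕ) = i q then A i else 0) c ≤ partitionNorm n A c := by
  set N := n p + n q with hN
  set s : (Fin N → ℤˣ) → ∀ l, Fin (n l) → ℝ := fun ε l x =>
    (if l = p then signAt ε x else 1) * (if l = q then signAt ε x else 1)
  have hs : ∀ ε l x, s ε l x * s ε l x = 1 := by
    intro ε l x
    simp only [s]
    split_ifs <;> simp [signAt_mul_self]
  have hprod : ∀ ε (i : ∀ l, Fin (n l)), ∏ l, s ε l (i l) = signAt ε (i p) * signAt ε (i q) := by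
    intro ε i
    simp only [s, prod_mul_distrib, Fintype.prod_ite_eq']
  have hA : (fun i => if (i p : ℕ) = i q then A i else 0) =
      fun i => (Fintype.card (Fin N → ℤˣ) : ℝ)⁻¹ * ∑ ε, A i * ∏ l, s ε l (i l) := by
    funext i
    have hp := (i p).isLt
    have hq := (i q).isLt
    have horth := sum_signAt_mul_signAt (N := N) (a := i p) (b := i q) (by omega) (by omega)
    simp only [hprod, ← mul_sum, horth, Fintype.card_pi, Fintype.card_units_int, prod_const,
      card_univ, Fintype.card_fin, Nat.cast_pow, Nat.cast_ofNat]
    split_ifs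
    · field_simp
    · simp
  refine partitionNorm_le_of_partitionForm_le fun α hα => ?_
  rw [hA]
  exact partitionForm_average_le _ fun ε =>
    partitionForm_mul_signs_le_partitionNorm A (s ε) (hs ε) hα

end PartitionNorm

/-- Restricting an order-`2d` array to the diagonal on the axis pairs `(l, l+d)` for
`l ∈ S` (zeroing all other entries) does not increase any partition norm. -/
theorem diagonal_restriction_norm (d : ℕ) (n : Fin d → ℕ)
    (A : (∀ l : Fin d ⊕ Fin d, Fin (Sum.elim n n l)) → ℝ) (S : Finset (Fin d))
    {β : Type*} [Fintype β] [DecidableEq β] (c : Fin d ⊕ Fin d → β) :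
    partitionNorm (Sum.elim n n)
        (fun i => haveI : ∀ l : Fin d, Decidable (i (Sum.inl l) = i (Sum.inr l)) :=
          fun l => instDecidableEqFin _ _ _
          if ∀ l ∈ S, i (Sum.inl l) = i (Sum.inr l) then A i else 0) c ≤
      partitionNorm (Sum.elim n n) A c := by
  induction S using Finset.induction_on with
  | empty => simp
  | insert a s _ ih =>
    refine le_trans (le_of_eq ?_)
      ((partitionNorm_restrict_diagonal_le _ c (Sum.inl a) (Sum.inr a)).trans ih)
    congr 1
    funext i
    have hinsert : (∀ l ∈ insert a s, i (Sum.inl l) = i (Sum.inr l)) ↔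
        (i (Sum.inl a) : ℕ) = i (Sum.inr a) ∧ ∀ l ∈ s, i (Sum.inl l) = i (Sum.inr l) :=
      (forall_mem_insert ..).trans (and_congr_left' Fin.val_inj.symm)
    split_ifs <;> tauto
end
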